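/- arXiv:1905.02156 — 6 statements merged into one kernel-verified Lean document; each statement's English description precedes it below -/
import Mathlib

section
/- Let R be a unital associative algebra over a field F, let q ∈ F, and let A, B ∈ R satisfy A·B − q·B·A = 1. Write C = A·B − B·A. Then for all natural numbers k and l, A^l · C^k = q^{k·l} · C^k · A^l. -/
theorem Apow_mul_Cpow {F : Type*} [Field F] {R : Type*} [Ring R] [Algebra F R]
    (q : F) (A B : R) (h : A * B - q • (B * A) = 1) :
    ∀ k l : ℕ, A ^ l * (A * B - B * A) ^ k
      = q ^ (k * l) • ((A * B - B * A) ^ k * A ^ l) := by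
  have hAB : A * B = 1 + q • (B * A) := by
    rw [← sub_eq_iff_eq_add]; exact h
  set C := A * B - B * A with hC
  have hAC : A * C = q • (C * A) := by
    have h1 : A * (A * B) = A + q • (A * B * A) := by
      conv_lhs => rw [hAB]
      rw [mul_add, mul_one, mul_smul_comm, ← mul_assoc]
    have h2 : A * (B * A) = A + q • (B * (A * A)) := by
      rw [← mul_assoc]
      conv_lhs => rw [hAB]
      rw [add_mul, one_mul, smul_mul_assoc, mul_assoc]
    rw [hC, mul_sub, h1, h2, sub_mul, smul_sub, mul_assoc B A A]
    abel
  have hACk : ∀ k : ℕ, A * C ^ k = q ^ k • (C ^ k * A) := by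
    intro k
    induction k with
    | zero => simp
    | succ k ih =>
      rw [pow_succ, ← mul_assoc, ih, smul_mul_assoc, mul_assoc, hAC,
        mul_smul_comm, smul_smul, ← pow_succ, ← mul_assoc, ← pow_succ]
  intro k l
  induction l with
  | zero => simp
  | succ l ih =>
    rw [pow_succ A l, mul_assoc, hACk k, mul_smul_comm, ← mul_assoc, ih,
      smul_mul_assoc, smul_smul, ← pow_add, mul_assoc, ← pow_succ,
      Nat.mul_succ, Nat.add_comm (k*l) k]
end

section
/- Let R be a unital associative algebra over a field F, let q ∈ F, and let A, B ∈ R satisfy A·B − q·B·A = 1. Write C = A·B − B·A. Then for all natural numbers k and l, C^k · B^l = q^{k·l} · B^l · C^k. -/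
theorem Cpow_mul_Bpow {F : Type*} [Field F] {R : Type*} [Ring R] [Algebra F R]
    (q : F) (A B : R) (h : A * B - q • (B * A) = 1) :
    ∀ k l : ℕ, (A * B - B * A) ^ k * B ^ l
      = q ^ (k * l) • (B ^ l * (A * B - B * A) ^ k) := by
  have hAB : A * B = 1 + q • (B * A) := by
    rw [← h]; abel
  set C := A * B - B * A with hC
  have key : C * B = q • (B * C) := by
    rw [hC, hAB]
    simp only [mul_add, add_mul, mul_sub, sub_mul, mul_one, one_mul, mul_smul_comm,
      smul_mul_assoc, smul_sub, smul_add, smul_smul]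
    rw [mul_assoc B A B, hAB]
    simp only [mul_add, mul_one, mul_smul_comm, smul_add, smul_sub, smul_smul, mul_assoc]
    abel
  have keyk : ∀ k : ℕ, C ^ k * B = q ^ k • (B * C ^ k) := by
    intro k
    induction k with
    | zero => simp
    | succ n ih =>
      rw [pow_succ, mul_assoc, key, mul_smul_comm, ← mul_assoc, ih, smul_mul_assoc,
        smul_smul, pow_succ, mul_comm (q ^ n) q, mul_assoc]
  intro k l
  induction l with
  | zero => simp
  | succ m ih =>
    rw [pow_succ, ← mul_assoc, ih, smul_mul_assoc, mul_assoc, keyk k,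
      mul_smul_comm, smul_smul, ← pow_add, mul_assoc, Nat.mul_succ]
end

section
/- Let R be a unital associative algebra over a field F, let q ∈ F with q ≠ 0, and let A, B ∈ R satisfy A·B − q·B·A = 1. Suppose q^p = 1 and {p}_q = 1 + q + ⋯ + q^{p−1} = 0 for some positive integer p. Then A^p commutes with B, i.e., A^p·B = B·A^p. -/
/-! Moving `B` leftwards through `A ^ p` one factor at a time gives
`A ^ p * B = q ^ p • (B * A ^ p) + [p]_q • A ^ (p - 1)`, and the hypotheses kill
`q ^ p - 1` and `[p]_q`. -/

open Finset

section QCommutation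

variable {F R : Type*} [CommSemiring F] [Semiring R] [Algebra F R] {q : F} {A B : R}

theorem pow_succ_mul_of_mul_eq_smul_add_one (hAB : A * B = q • (B * A) + 1) (n : ℕ) :
    A ^ (n + 1) * B = q ^ (n + 1) • (B * A ^ (n + 1)) + (∑ i ∈ range (n + 1), q ^ i) • A ^ n := by
  induction n with
  | zero => simpa using hAB
  | succ n ih =>
    calc A ^ (n + 2) * B = A * (A ^ (n + 1) * B) := by rw [pow_succ' A (n + 1), mul_assoc]
      _ = q ^ (n + 1) • ((A * B) * A ^ (n + 1)) + (∑ i ∈ range (n + 1), q ^ i) • A ^ (n + 1) := by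
        rw [ih, mul_add, mul_smul_comm, mul_smul_comm, mul_assoc, pow_succ' A n]
      _ = q ^ (n + 2) • (B * A ^ (n + 2)) + (∑ i ∈ range (n + 2), q ^ i) • A ^ (n + 1) := by
        rw [hAB, add_mul, one_mul, smul_mul_assoc, mul_assoc, ← pow_succ' A (n + 1),
          smul_add, smul_smul, ← pow_succ, sum_range_succ _ (n + 1), add_smul]
        abel

end QCommutation

theorem Apow_p_comm_B_general {F : Type*} [Field F] {R : Type*} [Ring R] [Algebra F R]
    (q : F) (A B : R) (h : A * B - q • (B * A) = 1)
    (p : ℕ) (hqp : q ^ p = 1)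
    (hsum : (∑ i ∈ Finset.range p, q ^ i) = 0) :
    A ^ p * B = B * A ^ p := by
  cases p with
  | zero => simp
  | succ m =>
    rw [pow_succ_mul_of_mul_eq_smul_add_one (eq_add_of_sub_eq' h) m, hqp, hsum, one_smul,
      zero_smul, add_zero]

theorem Apow_p_comm_B {F : Type*} [Field F] {R : Type*} [Ring R] [Algebra F R]
    (q : F) (hq0 : q ≠ 0) (A B : R) (h : A * B - q • (B * A) = 1)
    (p : ℕ) (hp : 0 < p) (hqp : q ^ p = 1)
    (hsum : (∑ i ∈ Finset.range p, q ^ i) = 0) :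
    A ^ p * B = B * A ^ p :=
  Apow_p_comm_B_general q A B h p hqp hsum
end

section
/- Let R be a unital associative algebra over a field F, let q ∈ F with q ≠ 0, and let A, B ∈ R satisfy A·B − q·B·A = 1. Suppose q^p = 1 and {p}_q = 0 for some positive integer p. Then B^p commutes with A, i.e., B^p·A = A·B^p. -/
open Finset

section QCommutation

variable {S R : Type*} [CommSemiring S] [Semiring R] [Algebra S R] {q : S} {A B : R}

theorem mul_pow_succ_of_mul_eq_smul_add_one (hAB : A * B = q • (B * A) + 1) (n : ℕ) :
    A * B ^ (n + 1) = q ^ (n + 1) • (B ^ (n + 1) * A) + (∑ i ∈ range (n + 1), q ^ i) • B ^ n := by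
  induction n with
  | zero => simp [hAB]
  | succ n ih =>
    calc A * B ^ (n + 2) = A * B ^ (n + 1) * B := by rw [pow_succ _ (n + 1), mul_assoc]
      _ = q ^ (n + 1) • (B ^ (n + 1) * (A * B)) + (∑ i ∈ range (n + 1), q ^ i) • B ^ (n + 1) := by
        rw [ih, add_mul, smul_mul_assoc, smul_mul_assoc, mul_assoc, pow_succ B n]
      _ = q ^ (n + 2) • (B ^ (n + 2) * A) + (∑ i ∈ range (n + 2), q ^ i) • B ^ (n + 1) := by
        rw [hAB, sum_range_succ _ (n + 1), mul_add, mul_one, mul_smul_comm, smul_add, smul_smul,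
          add_smul, ← pow_succ, ← mul_assoc, ← pow_succ]
        abel

theorem pow_mul_comm_of_mul_eq_smul_add_one (hAB : A * B = q • (B * A) + 1) {p : ℕ} (hp : 0 < p)
    (hqp : q ^ p = 1) (hsum : ∑ i ∈ range p, q ^ i = 0) : B ^ p * A = A * B ^ p := by
  obtain ⟨n, rfl⟩ := Nat.exists_eq_add_of_lt hp
  rw [zero_add] at *
  rw [mul_pow_succ_of_mul_eq_smul_add_one hAB, hqp, hsum, one_smul, zero_smul, add_zero]

end QCommutation

theorem Bpow_p_comm_A_general {F : Type*} [Field F] {R : Type*} [Ring R] [Algebra F R]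
    (q : F) (A B : R) (h : A * B - q • (B * A) = 1)
    (p : ℕ) (hp : 0 < p) (hqp : q ^ p = 1)
    (hsum : (∑ i ∈ Finset.range p, q ^ i) = 0) :
    B ^ p * A = A * B ^ p :=
  pow_mul_comm_of_mul_eq_smul_add_one (sub_eq_iff_eq_add'.mp h) hp hqp hsum

theorem Bpow_p_comm_A {F : Type*} [Field F] {R : Type*} [Ring R] [Algebra F R]
    (q : F) (hq0 : q ≠ 0) (A B : R) (h : A * B - q • (B * A) = 1)
    (p : ℕ) (hp : 0 < p) (hqp : q ^ p = 1)
    (hsum : (∑ i ∈ Finset.range p, q ^ i) = 0) :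
    B ^ p * A = A * B ^ p :=
  Bpow_p_comm_A_general q A B h p hp hqp hsum
end

section
/- Let R be a unital associative algebra over a field F, let q ∈ F with q ≠ 0, and let A, B ∈ R satisfy A·B − q·B·A = 1. Suppose q^p = 1 and {p}_q = 0 for some positive integer p. Then the element (A·B − B·A)^p is central in the subalgebra generated by A and B; that is, (AB−BA)^p commutes with both A and B. -/
/-!
With `C = AB - BA`, the relation `AB - q BA = 1` gives `AC - q CA = A(AB - qBA) - (AB - qBA)A = 0`
and likewise `CB - q BC = 0`. Hence `A Cⁿ = qⁿ Cⁿ A` and `Cⁿ B = qⁿ B Cⁿ`, and `q ^ p = 1` makes `Cᵖ`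
commute with `A` and `B`.
-/

section QCommute

variable {F R : Type*} [CommSemiring F] [Semiring R] [Algebra F R] {q : F}

theorem mul_pow_eq_smul_pow_mul {a c : R} (h : a * c = q • (c * a)) (n : ℕ) :
    a * c ^ n = q ^ n • (c ^ n * a) := by
  induction n with
  | zero => simp
  | succ n ih =>
    rw [pow_succ', ← mul_assoc, h, smul_mul_assoc, mul_assoc, ih, mul_smul_comm, smul_smul,
      ← mul_assoc, ← pow_succ']

theorem pow_mul_eq_smul_mul_pow {c b : R} (h : c * b = q • (b * c)) (n : ℕ) :
    c ^ n * b = q ^ n • (b * c ^ n) := by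
  induction n with
  | zero => simp
  | succ n ih =>
    rw [pow_succ, mul_assoc, h, mul_smul_comm, ← mul_assoc, ih, smul_mul_assoc, smul_smul,
      mul_assoc, ← pow_succ, ← pow_succ']

end QCommute

section QWeyl

variable {F R : Type*} [CommRing F] [Ring R] [Algebra F R] {q : F} {A B : R}

theorem mul_commutator_of_qWeyl (h : A * B - q • (B * A) = 1) :
    A * (A * B - B * A) = q • ((A * B - B * A) * A) := by
  have : A * (A * B - B * A) - q • ((A * B - B * A) * A)
      = A * (A * B - q • (B * A)) - (A * B - q • (B * A)) * A := by
    simp only [mul_sub, sub_mul, mul_smul_comm, smul_mul_assoc, smul_sub, mul_assoc]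
    abel
  rwa [h, mul_one, one_mul, sub_self, sub_eq_zero] at this

theorem commutator_mul_of_qWeyl (h : A * B - q • (B * A) = 1) :
    (A * B - B * A) * B = q • (B * (A * B - B * A)) := by
  have : (A * B - B * A) * B - q • (B * (A * B - B * A))
      = (A * B - q • (B * A)) * B - B * (A * B - q • (B * A)) := by
    simp only [mul_sub, sub_mul, mul_smul_comm, smul_mul_assoc, smul_sub, mul_assoc]
    abel
  rwa [h, mul_one, one_mul, sub_self, sub_eq_zero] at this

end QWeyl

theorem Cpow_p_central_general {F : Type*} [Field F] {R : Type*} [Ring R] [Algebra F R]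
    (q : F) (A B : R) (h : A * B - q • (B * A) = 1)
    (p : ℕ) (hqp : q ^ p = 1) :
    (A * B - B * A) ^ p * A = A * (A * B - B * A) ^ p ∧
      (A * B - B * A) ^ p * B = B * (A * B - B * A) ^ p := by
  constructor
  · rw [mul_pow_eq_smul_pow_mul (mul_commutator_of_qWeyl h) p, hqp, one_smul]
  · rw [pow_mul_eq_smul_mul_pow (commutator_mul_of_qWeyl h) p, hqp, one_smul]

theorem Cpow_p_central {F : Type*} [Field F] {R : Type*} [Ring R] [Algebra F R]
    (q : F) (hq0 : q ≠ 0) (A B : R) (h : A * B - q • (B * A) = 1)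
    (p : ℕ) (hp : 0 < p) (hqp : q ^ p = 1)
    (hsum : (∑ i ∈ Finset.range p, q ^ i) = 0) :
    (A * B - B * A) ^ p * A = A * (A * B - B * A) ^ p ∧
      (A * B - B * A) ^ p * B = B * (A * B - B * A) ^ p :=
  Cpow_p_central_general q A B h p hqp
end

section
/- Let R be a unital associative algebra over a field F, let q ∈ F, q ≠ 1, and let A, B ∈ R satisfy A·B − q·B·A = 1. Write C = A·B − B·A and let ad(x)(y) = xy − yx. Then for all natural numbers k and all positive integers l: ((−ad C)^k ∘ (−ad A)^{l+1})(B) = −(1−q)^l (q^l − 1)^k · C^{k+1}·A^l. -/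
theorem nested_ad_formula {F : Type*} [Field F] {R : Type*} [Ring R] [Algebra F R]
    (q : F) (hq1 : q ≠ 1) (A B : R) (h : A * B - q • (B * A) = 1) :
    ∀ (k l : ℕ), 0 < l →
      (fun y => -((A * B - B * A) * y - y * (A * B - B * A)))^[k]
          ((fun y => -(A * y - y * A))^[l + 1] B)
        = (-((1 - q) ^ l * (q ^ l - 1) ^ k)) • ((A * B - B * A) ^ (k + 1) * A ^ l) := by
  intro k l _
  set C : R := A * B - B * A with hCdef
  have hAB : A * B = 1 + q • (B * A) := eq_add_of_sub_eq h
  -- A * C = q • (C * A)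
  have hAC : A * C = q • (C * A) := by
    have h1 : A * (B * A) = A + q • (B * A * A) := by
      rw [← mul_assoc, hAB, add_mul, one_mul, smul_mul_assoc]
    rw [hCdef, mul_sub, sub_mul, hAB]
    simp only [mul_add, add_mul, mul_one, one_mul, mul_smul_comm, smul_mul_assoc, h1,
      smul_add, smul_sub, mul_assoc]
    module
  -- A^n * C = q^n • (C * A^n)
  have hAnC : ∀ n : ℕ, A ^ n * C = (q ^ n) • (C * A ^ n) := by
    intro n
    induction n with
    | zero => simp
    | succ n ih =>
      calc A ^ (n + 1) * C = A * (A ^ n * C) := by rw [pow_succ', mul_assoc]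
        _ = A * ((q ^ n) • (C * A ^ n)) := by rw [ih]
        _ = (q ^ n) • (A * C * A ^ n) := by rw [mul_smul_comm, mul_assoc]
        _ = (q ^ n) • ((q • (C * A)) * A ^ n) := by rw [hAC]
        _ = (q ^ (n + 1)) • (C * A ^ (n + 1)) := by
            rw [smul_mul_assoc, smul_smul, ← pow_succ, mul_assoc, ← pow_succ']
  -- step one: iterated (-ad A) on B
  have hstep1 : ∀ m : ℕ,
      (fun y => -(A * y - y * A))^[m + 1] B = (-((1 - q) ^ m)) • (C * A ^ m) := by
    intro m
    induction m with
    | zero => simp [hCdef]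
    | succ m ih =>
      rw [Function.iterate_succ_apply', ih]
      have key : A * (C * A ^ m) - (C * A ^ m) * A = ((q : F) - 1) • (C * A ^ (m + 1)) := by
        rw [← mul_assoc A C, hAC, smul_mul_assoc, mul_assoc, mul_assoc, ← pow_succ',
          ← pow_succ, sub_smul, one_smul]
      simp only [mul_smul_comm, smul_mul_assoc, ← smul_sub, key, smul_smul]
      rw [← neg_smul]
      congr 1
      ring
  -- step two: iterated (-ad C) on C^(j+1) * A^l
  have hstep2 : ∀ n : ℕ,
      (fun y => -(C * y - y * C))^[n] (C * A ^ l)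
        = ((q ^ l - 1) ^ n) • (C ^ (n + 1) * A ^ l) := by
    intro n
    induction n with
    | zero => simp
    | succ n ih =>
      rw [Function.iterate_succ_apply', ih]
      have key : C * (C ^ (n + 1) * A ^ l) - (C ^ (n + 1) * A ^ l) * C
          = ((1 : F) - q ^ l) • (C ^ (n + 2) * A ^ l) := by
        rw [mul_assoc, hAnC, mul_smul_comm, ← mul_assoc, ← mul_assoc, ← pow_succ, ← pow_succ',
          sub_smul, one_smul]
      simp only [mul_smul_comm, smul_mul_assoc, ← smul_sub, key, smul_smul]
      rw [← neg_smul]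
      congr 1
      ring
  -- iterate commutes with smul
  have hsmul : ∀ (n : ℕ) (s : F) (x : R),
      (fun y => -(C * y - y * C))^[n] (s • x) = s • (fun y => -(C * y - y * C))^[n] x := by
    intro n
    induction n with
    | zero => intro s x; simp
    | succ n ih =>
      intro s x
      rw [Function.iterate_succ_apply, Function.iterate_succ_apply]
      have : -(C * (s • x) - (s • x) * C) = s • (-(C * x - x * C)) := by
        rw [mul_smul_comm, smul_mul_assoc, ← smul_sub, ← smul_neg]
      rw [this, ih]
  rw [hstep1 l, hsmul, hstep2, smul_smul]
  congr 1
  ring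
end
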